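/- Let F : ℝ^n → ℝ be differentiable with L-Lipschitz gradient and bounded below by F*. Let 0 < η ≤ 1/L and define gradient-descent iterates θ_{t+1} = θ_t − η·∇F(θ_t) from an arbitrary initial point θ_0. Then the series ∑_{t=0}^{∞} ‖∇F(θ_t)‖² converges (with sum at most 2·(F(θ_0) − F*)/η), and consequently ∇F(θ_t) → 0 as t → ∞. -/

import Mathlib

/-!
One gradient step of size `η ≤ 1/L` decreases `F` by at least `η/2 · ‖∇F‖²`: this is the
descent lemma `F (x + v) ≤ F x + ⟪∇F x, v⟫ + L/2 ‖v‖²`, obtained by comparing `F` with its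
first-order model along the segment `[x, x + v]`. Telescoping these decreases against the lower
bound `F*` bounds every partial sum of `‖∇F (θ t)‖²` by `2 (F (θ 0) - F*) / η`, and the terms of a
convergent series tend to zero.
-/

open Filter Topology
open scoped RealInnerProductSpace

section Smooth

variable {E : Type*} [NormedAddCommGroup E] [InnerProductSpace ℝ E] [CompleteSpace E]
  {F : E → ℝ} {L : ℝ}

theorem hasDerivAt_comp_add_smul (hF : Differentiable ℝ F) (x v : E) (t : ℝ) :
    HasDerivAt (fun s : ℝ => F (x + s • v)) ⟪gradient F (x + t • v), v⟫ t := by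
  have hline : HasDerivAt (fun s : ℝ => x + s • v) v t := by
    simpa using ((hasDerivAt_id t).smul_const v).const_add x
  have hcomp := (hF (x + t • v)).hasGradientAt.hasFDerivAt.comp_hasDerivAt t hline
  rwa [InnerProductSpace.toDual_apply_apply] at hcomp

theorem inner_gradient_add_smul_sub_le
    (hL : ∀ x y, ‖gradient F x - gradient F y‖ ≤ L * ‖x - y‖)
    (x v : E) {t : ℝ} (ht : 0 ≤ t) :
    ⟪gradient F (x + t • v), v⟫ - ⟪gradient F x, v⟫ ≤ L * t * ‖v‖ ^ 2 := by
  have hlip : ‖gradient F (x + t • v) - gradient F x‖ ≤ L * (t * ‖v‖) := by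
    simpa [norm_smul, abs_of_nonneg ht] using hL (x + t • v) x
  calc ⟪gradient F (x + t • v), v⟫ - ⟪gradient F x, v⟫
      = ⟪gradient F (x + t • v) - gradient F x, v⟫ := (inner_sub_left _ _ _).symm
    _ ≤ ‖gradient F (x + t • v) - gradient F x‖ * ‖v‖ := real_inner_le_norm _ _
    _ ≤ L * (t * ‖v‖) * ‖v‖ := mul_le_mul_of_nonneg_right hlip (norm_nonneg v)
    _ = L * t * ‖v‖ ^ 2 := by ring

theorem apply_add_le_of_lipschitz_gradient (hF : Differentiable ℝ F)
    (hL : ∀ x y, ‖gradient F x - gradient F y‖ ≤ L * ‖x - y‖) (x v : E) :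
    F (x + v) ≤ F x + ⟪gradient F x, v⟫ + L / 2 * ‖v‖ ^ 2 := by
  set φ : ℝ → ℝ := fun t => F (x + t • v) - t * ⟪gradient F x, v⟫ - L / 2 * ‖v‖ ^ 2 * t ^ 2
  have hφ : ∀ t, HasDerivAt φ
      (⟪gradient F (x + t • v), v⟫ - ⟪gradient F x, v⟫ - L / 2 * ‖v‖ ^ 2 * (2 * t)) t := by
    intro t
    have hlin : HasDerivAt (fun s : ℝ => s * ⟪gradient F x, v⟫) ⟪gradient F x, v⟫ t := by
      simpa using (hasDerivAt_id t).mul_const ⟪gradient F x, v⟫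
    have hquad : HasDerivAt (fun s : ℝ => L / 2 * ‖v‖ ^ 2 * s ^ 2)
        (L / 2 * ‖v‖ ^ 2 * (2 * t)) t := by
      simpa using (hasDerivAt_pow 2 t).const_mul (L / 2 * ‖v‖ ^ 2)
    exact ((hasDerivAt_comp_add_smul hF x v t).sub hlin).sub hquad
  have hanti : AntitoneOn φ (Set.Ici 0) := by
    refine antitoneOn_of_hasDerivWithinAt_nonpos (convex_Ici 0)
      (fun t _ => (hφ t).continuousAt.continuousWithinAt)
      (fun t _ => (hφ t).hasDerivWithinAt) fun t ht => ?_
    rw [interior_Ici] at ht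
    linarith [inner_gradient_add_smul_sub_le hL x v ht.le]
  have h10 : φ 1 ≤ φ 0 := hanti Set.self_mem_Ici (Set.mem_Ici.2 zero_le_one) zero_le_one
  simp only [φ, one_smul, zero_smul, add_zero, one_mul, zero_mul, one_pow, mul_one, sub_zero,
    zero_pow two_ne_zero, mul_zero] at h10
  linarith

theorem apply_sub_smul_gradient_le (hF : Differentiable ℝ F)
    (hL : ∀ x y, ‖gradient F x - gradient F y‖ ≤ L * ‖x - y‖)
    {η : ℝ} (hη : 0 ≤ η) (hLη : L * η ≤ 1) (x : E) :
    F (x - η • gradient F x) ≤ F x - η / 2 * ‖gradient F x‖ ^ 2 := by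
  have h := apply_add_le_of_lipschitz_gradient hF hL x (-(η • gradient F x))
  rw [norm_neg, norm_smul, Real.norm_of_nonneg hη, inner_neg_right, real_inner_smul_right,
    real_inner_self_eq_norm_sq, ← sub_eq_add_neg x] at h
  nlinarith [mul_nonneg hη (sq_nonneg ‖gradient F x‖)]

end Smooth

theorem summable_and_tsum_le_of_mul_le_sub_succ {g a : ℕ → ℝ} {c m : ℝ} (hc : 0 < c)
    (hg : ∀ t, 0 ≤ g t) (hdec : ∀ t, c * g t ≤ a t - a (t + 1)) (hm : ∀ t, m ≤ a t) :
    Summable g ∧ ∑' t, g t ≤ (a 0 - m) / c := by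
  have hpartial : ∀ N, ∑ t ∈ Finset.range N, g t ≤ (a 0 - m) / c := by
    intro N
    rw [le_div_iff₀ hc, Finset.sum_mul]
    calc ∑ t ∈ Finset.range N, g t * c
        ≤ ∑ t ∈ Finset.range N, (a t - a (t + 1)) :=
          Finset.sum_le_sum fun t _ => by linarith [hdec t]
      _ = a 0 - a N := Finset.sum_range_sub' a N
      _ ≤ a 0 - m := by linarith [hm N]
  exact ⟨summable_of_sum_range_le hg hpartial, Real.tsum_le_of_sum_range_le hg hpartial⟩

theorem tendsto_zero_of_summable_norm_sq {E : Type*} [SeminormedAddCommGroup E] {f : ℕ → E}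
    (h : Summable fun t => ‖f t‖ ^ 2) : Tendsto f atTop (𝓝 0) := by
  rw [tendsto_zero_iff_norm_tendsto_zero]
  simpa [Function.comp_def, Real.sqrt_sq (norm_nonneg _)] using
    (Real.continuous_sqrt.tendsto 0).comp h.tendsto_atTop_zero

/-- Gradient descent with constant step size `0 < η ≤ 1/L` on an `L`-Lipschitz-smooth
objective bounded below has square-summable gradient norms (with explicit sum bound),
hence gradients converging to zero. -/
theorem gradient_descent_sq_summable_grad
    (n : ℕ) (F : EuclideanSpace ℝ (Fin n) → ℝ) (L η Fstar : ℝ)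
    (hF : Differentiable ℝ F)
    (hL : ∀ x y, ‖gradient F x - gradient F y‖ ≤ L * ‖x - y‖)
    (hbdd : ∀ x, Fstar ≤ F x)
    (hη0 : 0 < η) (hηL : η ≤ 1 / L)
    (θ : ℕ → EuclideanSpace ℝ (Fin n))
    (hstep : ∀ t, θ (t + 1) = θ t - η • gradient F (θ t)) :
    Summable (fun t => ‖gradient F (θ t)‖ ^ 2) ∧
      (∑' t, ‖gradient F (θ t)‖ ^ 2) ≤ 2 * (F (θ 0) - Fstar) / η ∧
      Tendsto (fun t => gradient F (θ t)) atTop (𝓝 0) := by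
  have hLpos : 0 < L := by
    by_contra! hL0
    linarith [one_div_nonpos.2 hL0]
  have hLη : L * η ≤ 1 := by rw [mul_comm, ← le_div_iff₀ hLpos]; exact hηL
  have hdec : ∀ t, η / 2 * ‖gradient F (θ t)‖ ^ 2 ≤ F (θ t) - F (θ (t + 1)) := fun t => by
    linarith [hstep t ▸ apply_sub_smul_gradient_le hF hL hη0.le hLη (θ t)]
  obtain ⟨hsum, hle⟩ := summable_and_tsum_le_of_mul_le_sub_succ (half_pos hη0)
    (fun _ => sq_nonneg _) hdec fun t => hbdd (θ t)
  refine ⟨hsum, hle.trans_eq ?_, tendsto_zero_of_summable_norm_sq hsum⟩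
  field_simp
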